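/- arXiv:1406.0207 — 7 statements merged into one kernel-verified Lean document; each statement's English description precedes it below -/
import Mathlib

section
/- Let a < b be real numbers and C > 0. Let (φ_n) be a sequence of continuously differentiable functions ℝ → ℝ such that ∫_a^b (φ_n'(x))² dx ≤ C² for every n. Let u_c : [a,b] → ℝ be continuous, and suppose that φ_n(x) → u_c(x) as n → ∞ for Lebesgue-almost every x ∈ (a,b). Then φ_n(x) → u_c(x) as n → ∞ for every x ∈ [a,b]. -/
/-!
By Cauchy–Schwarz, `|φ n z - φ n y| ≤ |C| * √|z - y|` on `[a, b]` for every `n`, so the `φ n` are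
equicontinuous on `[a, b]`. The points of `(a, b)` where `φ n → u` have full measure, hence are
dense in `[a, b]`, and an equicontinuous family that converges on a set to a function continuous
on its closure converges on the whole closure.
-/

open MeasureTheory Set Filter

theorem integral_abs_le_sqrt_integral_sq_mul_sqrt_measureReal
    {α : Type*} [MeasurableSpace α] {μ : Measure α} [IsFiniteMeasure μ] {g : α → ℝ}
    (hg : MemLp g 2 μ) :
    ∫ x, |g x| ∂μ ≤ √(∫ x, g x ^ 2 ∂μ) * √(μ.real univ) := by
  have holder := integral_mul_le_Lp_mul_Lq_of_nonneg (μ := μ) Real.HolderConjugate.two_two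
    (f := fun x => |g x|) (g := fun _ => (1 : ℝ))
    (Eventually.of_forall fun x => abs_nonneg (g x)) (Eventually.of_forall fun _ => zero_le_one)
    (by rw [ENNReal.ofReal_ofNat]; exact hg.abs) (by simpa using memLp_const (1 : ℝ))
  simpa [Real.sqrt_eq_rpow, Real.rpow_two] using holder

theorem abs_sub_le_sqrt_integral_deriv_sq_mul_sqrt {f : ℝ → ℝ} (hf : ContDiff ℝ 1 f)
    {y z : ℝ} (hyz : y ≤ z) :
    |f z - f y| ≤ √(∫ x in Ioc y z, deriv f x ^ 2) * √(z - y) := by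
  have hf' : Continuous (deriv f) := hf.continuous_deriv le_rfl
  have := isFiniteMeasure_restrict.2 (measure_Ioc_lt_top (μ := volume) (a := y) (b := z)).ne
  have hL2 : MemLp (deriv f) 2 (volume.restrict (Ioc y z)) :=
    (memLp_two_iff_integrable_sq hf'.aestronglyMeasurable).2 (hf'.pow 2).integrableOn_Ioc
  calc |f z - f y| = |∫ x in Ioc y z, deriv f x| := by
        rw [← intervalIntegral.integral_of_le hyz, intervalIntegral.integral_deriv_eq_sub
          (fun x _ => (hf.differentiable one_ne_zero).differentiableAt)
          (hf'.intervalIntegrable y z)]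
    _ ≤ ∫ x in Ioc y z, |deriv f x| := abs_integral_le_integral_abs
    _ ≤ √(∫ x in Ioc y z, deriv f x ^ 2) * √(z - y) := by
        simpa [Real.volume_real_Ioc_of_le hyz] using
          integral_abs_le_sqrt_integral_sq_mul_sqrt_measureReal hL2

theorem dist_le_sqrt_mul_sqrt_dist_of_integral_deriv_sq_le {f : ℝ → ℝ} (hf : ContDiff ℝ 1 f)
    {a b M : ℝ} (hM : ∫ x in Icc a b, deriv f x ^ 2 ≤ M) {y z : ℝ} (hy : y ∈ Icc a b)
    (hz : z ∈ Icc a b) :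
    dist (f y) (f z) ≤ √M * √(dist y z) := by
  wlog hyz : y ≤ z generalizing y z
  · rw [dist_comm, dist_comm y]
    exact this hz hy (le_of_not_ge hyz)
  have hsub : Ioc y z ⊆ Icc a b := fun x hx => ⟨hy.1.trans hx.1.le, hx.2.trans hz.2⟩
  have hint : IntegrableOn (fun x => deriv f x ^ 2) (Icc a b) :=
    ((hf.continuous_deriv le_rfl).pow 2).integrableOn_Icc
  have hM' : ∫ x in Ioc y z, deriv f x ^ 2 ≤ M :=
    (setIntegral_mono_set hint (Eventually.of_forall fun x => sq_nonneg _)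
      hsub.eventuallyLE).trans hM
  rw [Real.dist_eq, Real.dist_eq, abs_sub_comm, abs_of_nonpos (sub_nonpos.2 hyz), neg_sub]
  exact (abs_sub_le_sqrt_integral_deriv_sq_mul_sqrt hf hyz).trans
    (mul_le_mul_of_nonneg_right (Real.sqrt_le_sqrt hM') (Real.sqrt_nonneg _))

theorem equicontinuous_domRestrict_Icc_of_integral_deriv_sq_le {ι : Type*} {F : ι → ℝ → ℝ}
    (hF : ∀ i, ContDiff ℝ 1 (F i)) {a b M : ℝ} (hM : ∀ i, ∫ x in Icc a b, deriv (F i) x ^ 2 ≤ M) :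
    Equicontinuous fun i => (Icc a b).domRestrict (F i) := by
  refine Metric.equicontinuous_of_continuity_modulus (fun d => √M * √d) ?_ _
    fun y z i => dist_le_sqrt_mul_sqrt_dist_of_integral_deriv_sq_le (hF i) (hM i) y.2 z.2
  have : Continuous fun d : ℝ => √M * √d := by fun_prop
  simpa using this.tendsto 0

theorem IsOpen.subset_closure_inter_setOf_of_ae_restrict {X : Type*} [TopologicalSpace X]
    [MeasurableSpace X] [OpensMeasurableSpace X] {μ : Measure X} [μ.IsOpenPosMeasure]
    {U : Set X} (hU : IsOpen U) {p : X → Prop} (hp : ∀ᵐ x ∂μ.restrict U, p x) :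
    U ⊆ closure (U ∩ {x | p x}) :=
  ((μ.dense_of_ae ((ae_restrict_iff' hU.measurableSet).1 hp)).open_subset_closure_inter hU).trans
    (closure_mono fun _ hx => ⟨hx.1, hx.2 hx.1⟩)

theorem ae_pointwise_convergence_to_everywhere_general
    (a b : ℝ) (hab : a < b) (C : ℝ)
    (φ : ℕ → ℝ → ℝ) (hφ : ∀ n, ContDiff ℝ 1 (φ n))
    (hbound : ∀ n, ∫ x in Set.Icc a b, (deriv (φ n) x) ^ 2 ≤ C ^ 2)
    (u : ℝ → ℝ) (hu : ContinuousOn u (Set.Icc a b))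
    (hae : ∀ᵐ x ∂(volume.restrict (Set.Ioo a b)),
      Tendsto (fun n => φ n x) atTop (nhds (u x))) :
    ∀ x ∈ Set.Icc a b, Tendsto (fun n => φ n x) atTop (nhds (u x)) := by
  intro x hx
  set S := Ioo a b ∩ {y | Tendsto (fun n => φ n y) atTop (nhds (u y))}
  have hS : Icc a b ⊆ closure S := by
    rw [← closure_Ioo hab.ne]
    exact closure_minimal (isOpen_Ioo.subset_closure_inter_setOf_of_ae_restrict hae)
      isClosed_closure
  have hSx : (⟨x, hx⟩ : Icc a b) ∈ closure (Subtype.val ⁻¹' S) := by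
    rw [closure_subtype, Subtype.image_preimage_coe,
      inter_eq_right.2 (inter_subset_left.trans Ioo_subset_Icc_self)]
    exact hS hx
  exact (equicontinuous_domRestrict_Icc_of_integral_deriv_sq_le hφ hbound ⟨x, hx⟩
    ).tendsto_of_mem_closure (hu.domRestrict.continuousAt.mono_left nhdsWithin_le_nhds)
      (fun y hy => hy.2) hSx

/-- Let `a < b` and `C > 0`. Let `φ n` be `C¹` functions with
`∫_a^b (φ_n')² ≤ C²` for each `n`, and let `u_c` be continuous on `[a,b]`. If
`φ_n → u_c` pointwise Lebesgue-a.e. on `(a,b)`, then `φ_n → u_c` pointwise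
everywhere on `[a,b]`. -/
theorem ae_pointwise_convergence_to_everywhere
    (a b : ℝ) (hab : a < b) (C : ℝ) (hC : 0 < C)
    (φ : ℕ → ℝ → ℝ) (hφ : ∀ n, ContDiff ℝ 1 (φ n))
    (hbound : ∀ n, ∫ x in Set.Icc a b, (deriv (φ n) x) ^ 2 ≤ C ^ 2)
    (u : ℝ → ℝ) (hu : ContinuousOn u (Set.Icc a b))
    (hae : ∀ᵐ x ∂(volume.restrict (Set.Ioo a b)),
      Tendsto (fun n => φ n x) atTop (nhds (u x))) :
    ∀ x ∈ Set.Icc a b, Tendsto (fun n => φ n x) atTop (nhds (u x)) :=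
  ae_pointwise_convergence_to_everywhere_general a b hab C φ hφ hbound u hu hae
end

section
/- Let a < b be real numbers, let a = x_0 < x_1 < ⋯ < x_n = b be a partition of [a,b] with mesh h := max_{1≤i≤n} (x_i − x_{i−1}). Let g : ℝ → ℝ be square-integrable on [a,b], let c ∈ ℝ, define v(x) = c + ∫_a^x g(t) dt for x ∈ [a,b], and let Pv be the piecewise linear interpolant of v with respect to the partition. Then for every x ∈ [a,b], |Pv(x) − v(x)| ≤ 2 h^{1/2} (∫_a^b g(t)² dt)^{1/2}. -/
/-! On the cell `[x i, x (i + 1)]` containing `t`, the error `P t - v t` is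
`r (v (x (i + 1)) - v (x i)) - (v t - v (x i))` with `r ∈ [0, 1]`, and by Cauchy–Schwarz every
increment of `v` over an interval of length `ℓ ≤ h` is at most `√ℓ ‖g‖₂ ≤ √h ‖g‖₂`. -/

open MeasureTheory Set intervalIntegral

theorem exists_mem_Icc_succ_of_mem_Icc {α : Type*} [LinearOrder α] (x : ℕ → α) {t : α} :
    ∀ n : ℕ, t ∈ Icc (x 0) (x (n + 1)) → ∃ i ≤ n, t ∈ Icc (x i) (x (i + 1))
  | 0, ht => ⟨0, le_rfl, ht⟩
  | n + 1, ht => by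
    by_cases htn : t ≤ x (n + 1)
    · obtain ⟨i, hin, hti⟩ := exists_mem_Icc_succ_of_mem_Icc x n ⟨ht.1, htn⟩
      exact ⟨i, hin.trans n.le_succ, hti⟩
    · exact ⟨n + 1, le_rfl, (not_le.1 htn).le, ht.2⟩

theorem abs_chord_sub_le (v : ℝ → ℝ) {z y t : ℝ} (hzt : z ≤ t) (hty : t ≤ y) :
    |v z + (v y - v z) * (t - z) / (y - z) - v t| ≤ |v t - v z| + |v y - v z| := by
  have hr₀ : 0 ≤ (t - z) / (y - z) := div_nonneg (by linarith) (by linarith)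
  have hr₁ : (t - z) / (y - z) ≤ 1 := div_le_one_of_le₀ (by linarith) (by linarith)
  calc |v z + (v y - v z) * (t - z) / (y - z) - v t|
      = |(v y - v z) * ((t - z) / (y - z)) - (v t - v z)| := by ring_nf
    _ ≤ |(v y - v z) * ((t - z) / (y - z))| + |v t - v z| := abs_sub _ _
    _ = |v y - v z| * ((t - z) / (y - z)) + |v t - v z| := by rw [abs_mul, abs_of_nonneg hr₀]
    _ ≤ |v y - v z| * 1 + |v t - v z| := by gcongr
    _ = |v t - v z| + |v y - v z| := by ring

theorem abs_intervalIntegral_le_sqrt_mul_sqrt {g : ℝ → ℝ} {z y : ℝ} (hzy : z ≤ y)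
    (hg : MemLp g 2 (volume.restrict (Icc z y))) :
    |∫ s in z..y, g s| ≤ √(y - z) * √(∫ s in Icc z y, g s ^ 2) := by
  have hHolder := integral_mul_le_Lp_mul_Lq_of_nonneg Real.HolderConjugate.two_two
    (f := fun s => |g s|) (g := fun _ => (1 : ℝ)) (μ := volume.restrict (Icc z y))
    (.of_forall fun _ => abs_nonneg _) (.of_forall fun _ => zero_le_one)
    (by simpa [Real.norm_eq_abs] using hg.norm) (memLp_const _)
  have hsq : ∀ s, |g s| ^ (2 : ℝ) = g s ^ 2 := fun s => by norm_cast; exact sq_abs _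
  simp only [mul_one, Real.one_rpow, hsq, setIntegral_const,
    Real.volume_real_Icc_of_le hzy, smul_eq_mul] at hHolder
  calc |∫ s in z..y, g s| ≤ ∫ s in Icc z y, |g s| := by
        rw [integral_of_le hzy, integral_Icc_eq_integral_Ioc]
        exact abs_integral_le_integral_abs
    _ ≤ √(∫ s in Icc z y, g s ^ 2) * √(y - z) := by
        simpa only [Real.sqrt_eq_rpow, one_div] using hHolder
    _ = √(y - z) * √(∫ s in Icc z y, g s ^ 2) := mul_comm _ _

theorem abs_intervalIntegral_le_sqrt_mul_sqrt_of_subset {g : ℝ → ℝ} {s : Set ℝ} {z y : ℝ}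
    (hzy : z ≤ y) (hsub : Icc z y ⊆ s) (hg : MemLp g 2 (volume.restrict s)) :
    |∫ u in z..y, g u| ≤ √(y - z) * √(∫ u in s, g u ^ 2) := by
  have hmono : ∫ u in Icc z y, g u ^ 2 ≤ ∫ u in s, g u ^ 2 :=
    setIntegral_mono_set hg.integrable_sq (.of_forall fun _ => sq_nonneg _) hsub.eventuallyLE
  calc |∫ u in z..y, g u| ≤ √(y - z) * √(∫ u in Icc z y, g u ^ 2) :=
        abs_intervalIntegral_le_sqrt_mul_sqrt hzy
          (hg.mono_measure (Measure.restrict_mono hsub le_rfl))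
    _ ≤ √(y - z) * √(∫ u in s, g u ^ 2) := by gcongr

section Primitive

variable {g v : ℝ → ℝ} {a b c : ℝ}

theorem sub_eq_intervalIntegral_of_eq_add_integral (hg : IntegrableOn g (Icc a b))
    (hv : ∀ t ∈ Icc a b, v t = c + ∫ s in a..t, g s) {z y : ℝ} (hz : z ∈ Icc a b)
    (hy : y ∈ Icc a b) : v y - v z = ∫ s in z..y, g s := by
  have ha : a ∈ Icc a b := left_mem_Icc.2 (hz.1.trans hz.2)
  rw [hv z hz, hv y hy, ← integral_interval_sub_left
    (hg.mono_set (uIcc_subset_Icc ha hy)).intervalIntegrable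
    (hg.mono_set (uIcc_subset_Icc ha hz)).intervalIntegrable]
  ring

theorem abs_sub_le_sqrt_mul_sqrt_of_eq_add_integral (hg : MemLp g 2 (volume.restrict (Icc a b)))
    (hv : ∀ t ∈ Icc a b, v t = c + ∫ s in a..t, g s) {z y : ℝ} (haz : a ≤ z) (hzy : z ≤ y)
    (hyb : y ≤ b) : |v y - v z| ≤ √(y - z) * √(∫ s in Icc a b, g s ^ 2) := by
  rw [sub_eq_intervalIntegral_of_eq_add_integral (hg.integrable one_le_two) hv
    ⟨haz, hzy.trans hyb⟩ ⟨haz.trans hzy, hyb⟩]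
  exact abs_intervalIntegral_le_sqrt_mul_sqrt_of_subset hzy (Icc_subset_Icc haz hyb) hg

end Primitive

/-- Let `a = x_0 < ⋯ < x_n = b` be a partition with mesh `h`, let
`v x = c + ∫_a^x g` with `g` square-integrable on `[a,b]`, and let `P` be the
piecewise linear interpolant of `v` on the partition. Then for every `t ∈ [a,b]`,
`|P t − v t| ≤ 2 h^{1/2} (∫_a^b g²)^{1/2}`. -/
theorem interpolant_pointwise_estimate
    (a b : ℝ)
    (n : ℕ) (hn : 1 ≤ n)
    (x : ℕ → ℝ) (hx0 : x 0 = a) (hxn : x n = b)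
    (hmono : ∀ i < n, x i < x (i + 1))
    (h : ℝ) (hh : h = (Finset.Icc 1 n).sup' (by
      simpa using Finset.nonempty_Icc.mpr hn) (fun i => x i - x (i - 1)))
    (g : ℝ → ℝ)
    (hg : MeasureTheory.MemLp g 2 (volume.restrict (Set.Icc a b)))
    (c : ℝ) (v : ℝ → ℝ)
    (hv : ∀ t ∈ Set.Icc a b, v t = c + ∫ s in a..t, g s)
    (P : ℝ → ℝ)
    (hP : ∀ i, 1 ≤ i → i ≤ n → ∀ t ∈ Set.Icc (x (i - 1)) (x i),
      P t = v (x (i - 1)) + (v (x i) - v (x (i - 1))) * (t - x (i - 1)) / (x i - x (i - 1))) :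
    ∀ t ∈ Set.Icc a b,
      |P t - v t| ≤ 2 * Real.sqrt h * Real.sqrt (∫ s in Set.Icc a b, (g s) ^ 2) := by
  intro t ht
  obtain ⟨i, hi, hti⟩ := exists_mem_Icc_succ_of_mem_Icc x (n - 1)
    (by rwa [Nat.sub_add_cancel hn, hx0, hxn])
  have hin : i + 1 ≤ n := by omega
  have hxmono : MonotoneOn x (Iic n) := (strictMonoOn_Iic_of_lt_succ hmono).monotoneOn
  have hxa : a ≤ x i := hx0 ▸ hxmono (by simp) (by simp; omega) i.zero_le
  have hxb : x (i + 1) ≤ b := hxn ▸ hxmono (by simpa using hin) (by simp) hin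
  have hmesh : x (i + 1) - x i ≤ h := by
    rw [hh]
    exact Finset.le_sup' (fun j => x j - x (j - 1)) (Finset.mem_Icc.2 ⟨Nat.le_add_left 1 i, hin⟩)
  set I := ∫ s in Icc a b, g s ^ 2
  have hincr : ∀ {z y : ℝ}, a ≤ z → z ≤ y → y ≤ b → |v y - v z| ≤ √(y - z) * √I :=
    abs_sub_le_sqrt_mul_sqrt_of_eq_add_integral hg hv
  rw [hP (i + 1) (Nat.le_add_left 1 i) hin t (by simpa using hti), Nat.add_sub_cancel]
  calc _ ≤ |v t - v (x i)| + |v (x (i + 1)) - v (x i)| := abs_chord_sub_le v hti.1 hti.2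
    _ ≤ √(t - x i) * √I + √(x (i + 1) - x i) * √I :=
      add_le_add (hincr hxa hti.1 (hti.2.trans hxb)) (hincr hxa (hti.1.trans hti.2) hxb)
    _ ≤ √h * √I + √h * √I := by gcongr; linarith [hti.2]
    _ = 2 * √h * √I := by ring
end

section
/- Let a < b be real numbers, let a = x_0 < x_1 < ⋯ < x_n = b be a partition of [a,b] with mesh h := max_{1≤i≤n} (x_i − x_{i−1}), and let μ be a finite positive Borel measure on ℝ with support contained in [a,b]. Let g : ℝ → ℝ be square-integrable on [a,b], let c ∈ ℝ, define v(x) = c + ∫_a^x g(t) dt for x ∈ [a,b], and let Pv be the piecewise linear interpolant of v with respect to the partition. Then (∫ |Pv − v|² dμ)^{1/2} ≤ 2 μ([a,b])^{1/2} h^{1/2} (∫_a^b g(t)² dt)^{1/2}. -/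
open MeasureTheory Set intervalIntegral

/-!
By Cauchy–Schwarz, `v` is Hölder continuous of exponent `1/2`:
`|v s - v r| ≤ √(s - r) ‖g‖_{L²[a,b]}`. On the cell `[x_j, x_{j+1}]` containing `t`, the
interpolant is `v x_j` plus a fraction of the increment `v x_{j+1} - v x_j`, so
`|Pv t - v t| ≤ |v x_j - v t| + |v x_{j+1} - v x_j| ≤ 2 √h ‖g‖_{L²[a,b]}`. Integrating this
uniform bound against `μ`, which lives on `[a,b]`, gives the estimate.
-/

theorem integral_abs_le_sqrt_measureReal_univ_mul_sqrt_integral_sq {α : Type*}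
    [MeasurableSpace α] {μ : Measure α} [IsFiniteMeasure μ] {f : α → ℝ} (hf : MemLp f 2 μ) :
    ∫ a, |f a| ∂μ ≤ √(μ.real univ) * √(∫ a, f a ^ 2 ∂μ) := by
  have holder := integral_mul_le_Lp_mul_Lq_of_nonneg Real.HolderConjugate.two_two
    (f := fun a => |f a|) (g := fun _ => (1 : ℝ)) (.of_forall fun a => abs_nonneg (f a))
    (.of_forall fun _ => zero_le_one) (by simpa using hf.norm) (by simpa using memLp_const 1)
  simpa [Real.sqrt_eq_rpow, mul_comm] using holder

theorem abs_intervalIntegral_le_sqrt_mul_sqrt_setIntegral_sq {g : ℝ → ℝ} {r s : ℝ} (hrs : r ≤ s)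
    (hg : MemLp g 2 (volume.restrict (Icc r s))) :
    |∫ u in r..s, g u| ≤ √(s - r) * √(∫ u in Icc r s, g u ^ 2) := by
  have hcs := integral_abs_le_sqrt_measureReal_univ_mul_sqrt_integral_sq hg
  rw [measureReal_restrict_apply_univ, Real.volume_real_Icc_of_le hrs] at hcs
  calc |∫ u in r..s, g u| ≤ ∫ u in r..s, |g u| := abs_integral_le_integral_abs hrs
    _ = ∫ u in Icc r s, |g u| := by rw [integral_of_le hrs, integral_Icc_eq_integral_Ioc]
    _ ≤ _ := hcs

theorem abs_sub_le_sqrt_mul_of_eq_add_intervalIntegral {a b c r s : ℝ} {g v : ℝ → ℝ}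
    (hg : MemLp g 2 (volume.restrict (Icc a b)))
    (hv : ∀ t ∈ Icc a b, v t = c + ∫ u in a..t, g u)
    (har : a ≤ r) (hrs : r ≤ s) (hsb : s ≤ b) :
    |v s - v r| ≤ √(s - r) * √(∫ u in Icc a b, g u ^ 2) := by
  have hsub : Icc r s ⊆ Icc a b := Icc_subset_Icc har hsb
  have hint : ∀ t ∈ Icc a b, IntervalIntegrable g volume a t := fun t ht =>
    (intervalIntegrable_iff_integrableOn_Icc_of_le ht.1).2 <|
      IntegrableOn.mono_set (hg.integrable one_le_two) (Icc_subset_Icc le_rfl ht.2)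
  have hdiff : v s - v r = ∫ u in r..s, g u := by
    have hr : r ∈ Icc a b := hsub (left_mem_Icc.2 hrs)
    have hs : s ∈ Icc a b := hsub (right_mem_Icc.2 hrs)
    rw [hv s hs, hv r hr, add_sub_add_left_eq_sub,
      integral_interval_sub_left (hint s hs) (hint r hr)]
  have hsq_le : ∫ u in Icc r s, g u ^ 2 ≤ ∫ u in Icc a b, g u ^ 2 :=
    setIntegral_mono_set hg.integrable_sq (Filter.Eventually.of_forall fun u => sq_nonneg (g u))
      hsub.eventuallyLE
  rw [hdiff]
  calc |∫ u in r..s, g u| ≤ √(s - r) * √(∫ u in Icc r s, g u ^ 2) :=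
        abs_intervalIntegral_le_sqrt_mul_sqrt_setIntegral_sq hrs
          (hg.mono_measure (Measure.restrict_mono hsub le_rfl))
    _ ≤ √(s - r) * √(∫ u in Icc a b, g u ^ 2) := by gcongr

theorem exists_lt_mem_Icc_succ_of_mem_Icc {α : Type*} [LinearOrder α] (x : ℕ → α) {n : ℕ}
    (hn : 0 < n) {t : α} (ht : t ∈ Icc (x 0) (x n)) : ∃ j < n, t ∈ Icc (x j) (x (j + 1)) := by
  induction n with
  | zero => exact absurd hn (lt_irrefl 0)
  | succ n ih =>
    by_cases htn : t ≤ x n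
    · rcases Nat.eq_zero_or_pos n with rfl | hn0
      · exact ⟨0, Nat.zero_lt_one, ht⟩
      · obtain ⟨j, hj, hjt⟩ := ih hn0 ⟨ht.1, htn⟩
        exact ⟨j, hj.trans n.lt_succ_self, hjt⟩
    · exact ⟨n, n.lt_succ_self, (not_le.1 htn).le, ht.2⟩

theorem abs_add_sub_mul_div_sub_le {p q t A B C : ℝ} (hpt : p ≤ t) (htq : t ≤ q) :
    |A + (B - A) * (t - p) / (q - p) - C| ≤ |A - C| + |B - A| := by
  have hθ : |(t - p) / (q - p)| ≤ 1 := by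
    rw [abs_of_nonneg (div_nonneg (sub_nonneg.2 hpt) (sub_nonneg.2 (hpt.trans htq)))]
    exact div_le_one_of_le₀ (by linarith) (by linarith)
  calc |A + (B - A) * (t - p) / (q - p) - C| = |(A - C) + (B - A) * ((t - p) / (q - p))| := by
        ring_nf
    _ ≤ |A - C| + |B - A| * |(t - p) / (q - p)| := by
        rw [← abs_mul]; exact abs_add_le _ _
    _ ≤ |A - C| + |B - A| := by
        gcongr; exact mul_le_of_le_one_right (abs_nonneg _) hθ

theorem sqrt_integral_sq_le_of_abs_le {α : Type*} [MeasurableSpace α] {μ : Measure α}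
    [IsFiniteMeasure μ] {s : Set α} {f : α → ℝ} {K : ℝ} (hs : μ sᶜ = 0) (hK : 0 ≤ K)
    (hf : ∀ t ∈ s, |f t| ≤ K) :
    √(∫ t, f t ^ 2 ∂μ) ≤ K * √(μ s).toReal := by
  have hbound : ∀ᵐ t ∂μ, f t ^ 2 ≤ K ^ 2 := by
    filter_upwards [mem_ae_iff.2 hs] with t ht
    exact sq_le_sq' (abs_le.1 (hf t ht)).1 (abs_le.1 (hf t ht)).2
  have hint : ∫ t, f t ^ 2 ∂μ ≤ K ^ 2 * (μ s).toReal := by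
    calc ∫ t, f t ^ 2 ∂μ ≤ ∫ _t, K ^ 2 ∂μ :=
          integral_mono_of_nonneg (Filter.Eventually.of_forall fun t => sq_nonneg (f t))
            (integrable_const _) hbound
      _ = K ^ 2 * (μ s).toReal := by
          rw [MeasureTheory.integral_const, smul_eq_mul, mul_comm, measureReal_def,
            measure_congr (ae_eq_univ.2 hs)]
  calc √(∫ t, f t ^ 2 ∂μ) ≤ √(K ^ 2 * (μ s).toReal) := Real.sqrt_le_sqrt hint
    _ = K * √(μ s).toReal := by rw [Real.sqrt_mul (sq_nonneg K), Real.sqrt_sq hK]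

theorem abs_interpolant_sub_le {a b h M : ℝ} {n : ℕ} {x : ℕ → ℝ} {v P : ℝ → ℝ} (hn : 0 < n)
    (hx0 : x 0 = a) (hxn : x n = b) (hmono : ∀ i < n, x i ≤ x (i + 1))
    (hmesh : ∀ i < n, x (i + 1) - x i ≤ h) (hM : 0 ≤ M)
    (hv : ∀ r s, a ≤ r → r ≤ s → s ≤ b → |v s - v r| ≤ √(s - r) * M)
    (hP : ∀ i, 1 ≤ i → i ≤ n → ∀ t ∈ Icc (x (i - 1)) (x i),
      P t = v (x (i - 1)) + (v (x i) - v (x (i - 1))) * (t - x (i - 1)) / (x i - x (i - 1)))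
    {t : ℝ} (ht : t ∈ Icc a b) :
    |P t - v t| ≤ 2 * (√h * M) := by
  obtain ⟨j, hjn, hjt⟩ := exists_lt_mem_Icc_succ_of_mem_Icc x hn (hx0 ▸ hxn ▸ ht)
  have hxmono : MonotoneOn x (Iic n) := monotoneOn_of_le_succ ordConnected_Iic
    fun i _ _ hi => hmono i (Order.succ_le_iff.1 (mem_Iic.1 hi))
  have hax : a ≤ x j := hx0 ▸ hxmono (mem_Iic.2 (Nat.zero_le n)) (mem_Iic.2 hjn.le) (Nat.zero_le j)
  have hxb : x (j + 1) ≤ b := hxn ▸ hxmono (mem_Iic.2 hjn) (mem_Iic.2 le_rfl) hjn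
  have hvar : ∀ r s, x j ≤ r → r ≤ s → s ≤ x (j + 1) → |v s - v r| ≤ √h * M :=
    fun r s hr hrs hs => (hv r s (hax.trans hr) hrs (hs.trans hxb)).trans <| by
      gcongr; linarith [hmesh j hjn]
  have hPt := hP (j + 1) (Nat.succ_pos j) hjn t (by simpa using hjt)
  simp only [Nat.add_sub_cancel] at hPt
  calc |P t - v t| ≤ |v (x j) - v t| + |v (x (j + 1)) - v (x j)| := by
        rw [hPt]; exact abs_add_sub_mul_div_sub_le hjt.1 hjt.2
    _ ≤ √h * M + √h * M := by
        rw [abs_sub_comm]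
        exact add_le_add (hvar _ _ le_rfl hjt.1 hjt.2) (hvar _ _ le_rfl (hmono j hjn) le_rfl)
    _ = 2 * (√h * M) := by ring

/-- Let `a = x_0 < ⋯ < x_n = b` be a partition with mesh `h`, let `μ`
be a finite positive Borel measure with support contained in `[a,b]`, let
`v x = c + ∫_a^x g` with `g` square-integrable on `[a,b]`, and let `P` be the
piecewise linear interpolant of `v` on the partition. Then
`(∫ |P − v|² dμ)^{1/2} ≤ 2 μ([a,b])^{1/2} h^{1/2} (∫_a^b g²)^{1/2}`. -/
theorem interpolant_L2mu_estimate
    (a b : ℝ)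
    (n : ℕ) (hn : 1 ≤ n)
    (x : ℕ → ℝ) (hx0 : x 0 = a) (hxn : x n = b)
    (hmono : ∀ i < n, x i < x (i + 1))
    (h : ℝ) (hh : h = (Finset.Icc 1 n).sup' (by
      simpa using Finset.nonempty_Icc.mpr hn) (fun i => x i - x (i - 1)))
    (μ : Measure ℝ) [IsFiniteMeasure μ]
    (hsupp : μ (Set.Icc a b)ᶜ = 0)
    (g : ℝ → ℝ)
    (hg : MeasureTheory.MemLp g 2 (volume.restrict (Set.Icc a b)))
    (c : ℝ) (v : ℝ → ℝ)
    (hv : ∀ t ∈ Set.Icc a b, v t = c + ∫ s in a..t, g s)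
    (P : ℝ → ℝ)
    (hP : ∀ i, 1 ≤ i → i ≤ n → ∀ t ∈ Set.Icc (x (i - 1)) (x i),
      P t = v (x (i - 1)) + (v (x i) - v (x (i - 1))) * (t - x (i - 1)) / (x i - x (i - 1))) :
    Real.sqrt (∫ t, (P t - v t) ^ 2 ∂μ) ≤
      2 * Real.sqrt (μ (Set.Icc a b)).toReal * Real.sqrt h *
        Real.sqrt (∫ s in Set.Icc a b, (g s) ^ 2) := by
  have hmesh : ∀ i < n, x (i + 1) - x i ≤ h := fun i hi => by
    simpa [hh] using Finset.le_sup' (fun i => x i - x (i - 1))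
      (Finset.mem_Icc.2 ⟨Nat.succ_pos i, hi⟩)
  have hpointwise : ∀ t ∈ Icc a b, |P t - v t| ≤ 2 * (√h * √(∫ s in Icc a b, g s ^ 2)) :=
    fun t ht => abs_interpolant_sub_le hn hx0 hxn (fun i hi => (hmono i hi).le) hmesh
      (Real.sqrt_nonneg _)
      (fun r s har hrs hsb => abs_sub_le_sqrt_mul_of_eq_add_intervalIntegral hg hv har hrs hsb)
      hP ht
  calc √(∫ t, (P t - v t) ^ 2 ∂μ)
      ≤ 2 * (√h * √(∫ s in Icc a b, g s ^ 2)) * √(μ (Icc a b)).toReal :=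
        sqrt_integral_sq_le_of_abs_le hsupp (by positivity) hpointwise
    _ = _ := by ring
end

section
/- Let ρ = (√5 − 1)/2, let S_1(x) = ρx and S_2(x) = ρx + (1 − ρ), and let μ be a Borel probability measure on ℝ with support contained in [0,1] satisfying μ(A) = (1/2) μ(S_1^{-1}(A)) + (1/2) μ(S_2^{-1}(A)) for every Borel set A ⊆ ℝ. Then μ([0, ρ²]) = 1/3, μ([ρ², ρ]) = 1/3, and μ([ρ, 1]) = 1/3. -/
open MeasureTheory Set

private lemma bc_toReal_half {a b c : ENNReal} (hb : b ≠ ⊤) (hc : c ≠ ⊤)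
    (h : a = 1 / 2 * b + 1 / 2 * c) :
    a.toReal = 1 / 2 * b.toReal + 1 / 2 * c.toReal := by
  subst h
  rw [ENNReal.toReal_add (ENNReal.mul_ne_top (by norm_num) hb)
    (ENNReal.mul_ne_top (by norm_num) hc), ENNReal.toReal_mul, ENNReal.toReal_mul]
  norm_num

set_option maxHeartbeats 1000000 in
/-- Let `ρ = (√5 − 1)/2` and let `μ` be the infinite Bernoulli
convolution associated with the golden ratio, i.e. the Borel probability measure
supported in `[0,1]` with `μ = ½ μ∘S₁⁻¹ + ½ μ∘S₂⁻¹` for `S₁ x = ρx`, `S₂ x = ρx + (1−ρ)`.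
Then `μ([0,ρ²]) = μ([ρ²,ρ]) = μ([ρ,1]) = 1/3`. -/
theorem bernoulli_convolution_measures_of_level_one_intervals
    (ρ : ℝ) (hρ : ρ = (Real.sqrt 5 - 1) / 2)
    (μ : Measure ℝ) [IsProbabilityMeasure μ]
    (hsupp : μ (Set.Icc (0 : ℝ) 1)ᶜ = 0)
    (hself : ∀ A : Set ℝ, MeasurableSet A →
      μ A = (1 / 2) * μ ((fun x => ρ * x) ⁻¹' A) +
            (1 / 2) * μ ((fun x => ρ * x + (1 - ρ)) ⁻¹' A)) :
    μ (Set.Icc 0 (ρ ^ 2)) = 1 / 3 ∧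
    μ (Set.Icc (ρ ^ 2) ρ) = 1 / 3 ∧
    μ (Set.Icc ρ 1) = 1 / 3 := by
  have h5 : Real.sqrt 5 ^ 2 = 5 := Real.sq_sqrt (by norm_num)
  have h5' : (2 : ℝ) < Real.sqrt 5 := by nlinarith [Real.sqrt_nonneg 5]
  have h5'' : Real.sqrt 5 < 3 := by nlinarith [Real.sqrt_nonneg 5]
  have hρ2 : ρ ^ 2 = 1 - ρ := by rw [hρ]; nlinarith
  have hρ0 : 0 < ρ := by rw [hρ]; nlinarith
  have hρ1 : ρ < 1 := by rw [hρ]; nlinarith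
  have hρρ : ρ ^ 2 < ρ := by nlinarith
  have hρρ0 : 0 < ρ ^ 2 := by positivity
  have hρ3 : ρ ^ 3 = 2 * ρ - 1 := by linear_combination (ρ - 1) * hρ2
  -- mass outside [0,1] is zero
  have hnull : ∀ s : Set ℝ, s ⊆ (Set.Icc (0:ℝ) 1)ᶜ → μ s = 0 :=
    fun s hs => measure_mono_null hs hsupp
  -- preimage computations
  have pre1a : (fun x => ρ * x) ⁻¹' Icc 0 (ρ ^ 2) = Icc 0 ρ := by
    ext x; simp only [mem_preimage, mem_Icc]
    constructor <;> (rintro ⟨h1, h2⟩; constructor <;> nlinarith [hρ0, hρ2, hρ3, mul_pos hρ0 hρ0])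
  have pre1b : (fun x => ρ * x + (1 - ρ)) ⁻¹' Icc 0 (ρ ^ 2) = Icc (-ρ) 0 := by
    ext x; simp only [mem_preimage, mem_Icc]
    constructor <;> (rintro ⟨h1, h2⟩; constructor <;> nlinarith [hρ0, hρ2, hρ3, mul_pos hρ0 hρ0])
  have pre2a : (fun x => ρ * x) ⁻¹' Icc (ρ ^ 2) ρ = Icc ρ 1 := by
    ext x; simp only [mem_preimage, mem_Icc]
    constructor <;> (rintro ⟨h1, h2⟩; constructor <;> nlinarith [hρ0, hρ2, hρ3, mul_pos hρ0 hρ0])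
  have pre2b : (fun x => ρ * x + (1 - ρ)) ⁻¹' Icc (ρ ^ 2) ρ = Icc 0 (ρ ^ 2) := by
    ext x; simp only [mem_preimage, mem_Icc]
    constructor <;> (rintro ⟨h1, h2⟩; constructor <;> nlinarith [hρ0, hρ2, hρ3, mul_pos hρ0 hρ0])
  have pre3a : (fun x => ρ * x) ⁻¹' Icc ρ 1 = Icc 1 (1 + ρ) := by
    ext x; simp only [mem_preimage, mem_Icc]
    constructor <;> (rintro ⟨h1, h2⟩; constructor <;> nlinarith [hρ0, hρ2, hρ3, mul_pos hρ0 hρ0])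
  have pre3b : (fun x => ρ * x + (1 - ρ)) ⁻¹' Icc ρ 1 = Icc (ρ ^ 2) 1 := by
    ext x; simp only [mem_preimage, mem_Icc]
    constructor <;> (rintro ⟨h1, h2⟩; constructor <;> nlinarith [hρ0, hρ2, hρ3, mul_pos hρ0 hρ0])
  have preS : ∀ y z : ℝ, ρ * z = y → (fun x => ρ * x) ⁻¹' {y} = {z} := by
    intro y z hz; ext x; simp only [mem_preimage, mem_singleton_iff]
    constructor <;> intro h <;> nlinarith [hρ0, hz]
  have preT : ∀ y z : ℝ, ρ * z + (1 - ρ) = y →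
      (fun x => ρ * x + (1 - ρ)) ⁻¹' {y} = {z} := by
    intro y z hz; ext x; simp only [mem_preimage, mem_singleton_iff]
    constructor <;> intro h <;> nlinarith [hρ0, hz]
  -- measures reduced to support
  have hIccneg : μ (Icc (-ρ) 0) = μ {0} := by
    refine (measure_eq_measure_of_null_diff (by simp [hρ0.le]) (hnull _ ?_)).symm
    intro x hx
    simp only [mem_diff, mem_Icc, mem_singleton_iff] at hx
    simp only [mem_compl_iff, mem_Icc, not_and, not_le]
    intro h
    rcases lt_or_eq_of_le hx.1.2 with h' | h'
    · linarith
    · exact absurd h' hx.2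
  have hIccbig : μ (Icc 1 (1 + ρ)) = μ {1} := by
    refine (measure_eq_measure_of_null_diff (by simp [hρ0.le]) (hnull _ ?_)).symm
    intro x hx
    simp only [mem_diff, mem_Icc, mem_singleton_iff] at hx
    simp only [mem_compl_iff, mem_Icc, not_and, not_le]
    intro h
    rcases lt_or_eq_of_le hx.1.1 with h' | h'
    · linarith
    · exact absurd h'.symm hx.2
  -- abbreviation for real-valued measures
  set f : Set ℝ → ℝ := fun s => (μ s).toReal with hf
  have hne : ∀ s : Set ℝ, μ s ≠ ⊤ := fun s => measure_ne_top μ s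
  have fzero : ∀ s : Set ℝ, μ s = 0 → f s = 0 := by
    intro s hs; show (μ s).toReal = 0; rw [hs]; simp
  have hEq : ∀ A : Set ℝ, MeasurableSet A →
      f A = 1 / 2 * f ((fun x => ρ * x) ⁻¹' A) +
            1 / 2 * f ((fun x => ρ * x + (1 - ρ)) ⁻¹' A) :=
    fun A hA => bc_toReal_half (hne _) (hne _) (hself A hA)
  -- atoms vanish
  have h0 : f {0} = 0 := by
    have h := hEq {0} (measurableSet_singleton 0)
    rw [preS 0 0 (by ring), preT 0 (-ρ) (by linear_combination -hρ2)] at h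
    have hz : f {(-ρ : ℝ)} = 0 := fzero _ (hnull _ (by
      intro x hx; simp only [mem_singleton_iff] at hx; subst hx
      simp only [mem_compl_iff, mem_Icc, not_and, not_le]; intro h; linarith))
    rw [hz] at h; linarith
  have h1 : f {1} = 0 := by
    have h := hEq {1} (measurableSet_singleton 1)
    rw [preS 1 (1 + ρ) (by linear_combination hρ2), preT 1 1 (by ring)] at h
    have hz : f {(1 + ρ : ℝ)} = 0 := fzero _ (hnull _ (by
      intro x hx; simp only [mem_singleton_iff] at hx; subst hx
      simp only [mem_compl_iff, mem_Icc, not_and, not_le]; intro h; linarith))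
    rw [hz] at h; linarith
  have hα : f {ρ ^ 2} = 1 / 2 * f {ρ} + 1 / 2 * f {0} := by
    have h := hEq {ρ ^ 2} (measurableSet_singleton _)
    rwa [preS (ρ ^ 2) ρ (by ring), preT (ρ ^ 2) 0 (by linear_combination -hρ2)] at h
  have hβ : f {ρ} = 1 / 2 * f {1} + 1 / 2 * f {ρ ^ 2} := by
    have h := hEq {ρ} (measurableSet_singleton _)
    rwa [preS ρ 1 (by ring), preT ρ (ρ ^ 2) (by linear_combination hρ3)] at h
  have hαβnn : 0 ≤ f {ρ ^ 2} := ENNReal.toReal_nonneg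
  have hα0 : f {ρ ^ 2} = 0 := by linarith
  have hβ0 : f {ρ} = 0 := by linarith
  -- main interval equations
  have e1 := hEq (Icc 0 (ρ ^ 2)) measurableSet_Icc
  rw [pre1a, pre1b] at e1
  have e2 := hEq (Icc (ρ ^ 2) ρ) measurableSet_Icc
  rw [pre2a, pre2b] at e2
  have e3 := hEq (Icc ρ 1) measurableSet_Icc
  rw [pre3a, pre3b] at e3
  have e1' : f (Icc (-ρ) 0) = f {0} := by show (μ _).toReal = (μ _).toReal; rw [hIccneg]
  have e3' : f (Icc 1 (1 + ρ)) = f {1} := by show (μ _).toReal = (μ _).toReal; rw [hIccbig]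
  rw [e1', h0] at e1
  rw [e3', h1] at e3
  -- additivity
  have hadd : ∀ x y z : ℝ, x ≤ y → y ≤ z → f {y} = 0 →
      f (Icc x z) = f (Icc x y) + f (Icc y z) := by
    intro x y z hxy hyz hy
    have hu : Icc x y ∪ Icc y z = Icc x z := Icc_union_Icc_eq_Icc hxy hyz
    have hi : Icc x y ∩ Icc y z = {y} := Icc_inter_Icc_eq_singleton hxy hyz
    have h := measure_union_add_inter (μ := μ) (Icc x y) (measurableSet_Icc (a := y) (b := z))
    rw [hu, hi] at h
    have hy' : μ {y} = 0 := by
      have hh : (μ {y}).toReal = 0 := hy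
      exact ((ENNReal.toReal_eq_zero_iff _).mp hh).resolve_right (hne _)
    rw [hy', add_zero] at h
    show (μ (Icc x z)).toReal = (μ (Icc x y)).toReal + (μ (Icc y z)).toReal
    rw [h, ENNReal.toReal_add (hne _) (hne _)]
  have d_eq : f (Icc 0 ρ) = f (Icc 0 (ρ ^ 2)) + f (Icc (ρ ^ 2) ρ) :=
    hadd 0 (ρ ^ 2) ρ (le_of_lt hρρ0) (le_of_lt hρρ) hα0
  have e_eq : f (Icc (ρ ^ 2) 1) = f (Icc (ρ ^ 2) ρ) + f (Icc ρ 1) :=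
    hadd (ρ ^ 2) ρ 1 (le_of_lt hρρ) (le_of_lt hρ1) hβ0
  have t_eq : f (Icc 0 1) = f (Icc 0 ρ) + f (Icc ρ 1) :=
    hadd 0 ρ 1 (le_of_lt hρ0) (le_of_lt hρ1) hβ0
  have htot : f (Icc 0 1) = 1 := by
    have h1' : μ (Icc (0:ℝ) 1) = 1 := by
      have h := measure_add_measure_compl (μ := μ) (measurableSet_Icc (a := (0:ℝ)) (b := 1))
      rw [hsupp, add_zero] at h
      rw [h, measure_univ]
    show (μ (Icc (0:ℝ) 1)).toReal = 1
    rw [h1']; simp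
  -- solve the linear system
  have ha : f (Icc 0 (ρ ^ 2)) = 1 / 3 := by linarith
  have hb : f (Icc (ρ ^ 2) ρ) = 1 / 3 := by linarith
  have hc : f (Icc ρ 1) = 1 / 3 := by linarith
  have key : ∀ s : Set ℝ, f s = 1 / 3 → μ s = 1 / 3 := by
    intro s hs
    have h3 : ((1 : ENNReal) / 3).toReal = 1 / 3 := by
      rw [ENNReal.toReal_div]; norm_num
    refine (ENNReal.toReal_eq_toReal_iff' (hne _) (by norm_num)).mp ?_
    rw [h3]; exact hs
  exact ⟨key _ ha, key _ hb, key _ hc⟩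
end

section
/- Let ρ = (√5 − 1)/2, let S_1(x) = ρx and S_2(x) = ρx + (1 − ρ), and let μ be a Borel probability measure on ℝ with support contained in [0,1] satisfying μ(A) = (1/2) μ(S_1^{-1}(A)) + (1/2) μ(S_2^{-1}(A)) for every Borel set A ⊆ ℝ. Then ∫_{[0,ρ²]} x² dμ(x) = ρ⁴ (5ρ + 4) / (6(ρ + 8)). -/
/-!
Self-similarity says `μ = ½ • S₁₊μ + ½ • S₂₊μ`. Since `ρ² = 1 - ρ`, the inverse maps send the
half-lines `(-∞, ρ²]` and `(-∞, ρ]` into each other up to `μ`-null sets: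
`S₁⁻¹(-∞, ρ²] = (-∞, ρ]`, `S₂⁻¹(-∞, ρ²] = (-∞, 0]` (null: it has half its own mass),
`S₁⁻¹(-∞, ρ] = (-∞, 1]` (full) and `S₂⁻¹(-∞, ρ] = (-∞, ρ²]`. Integrating `xᵏ` and expanding
`(ρx + 1 - ρ)ᵏ` binomially therefore relates the `k`-th moments of `μ` on `(-∞, ρ²]`, on
`(-∞, ρ]` and on `ℝ` to lower ones, and solving these linear systems for `k = 0, 1, 2` gives the
value. Finally `[0, ρ²]` and `(-∞, ρ²]` differ by a null set.
-/

open MeasureTheory Set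
open scoped ENNReal

theorem Continuous.integrable_of_measure_compl_eq_zero {X E : Type*} [TopologicalSpace X]
    [MeasurableSpace X] [OpensMeasurableSpace X] [T2Space X] [NormedAddCommGroup E]
    {μ : Measure X} [IsFiniteMeasureOnCompacts μ] {K : Set X} (hK : IsCompact K)
    (hμK : μ Kᶜ = 0) {f : X → E} (hf : Continuous f) : Integrable f μ := by
  rw [← Measure.restrict_eq_self_of_ae_mem (ae_iff.2 hμK)]
  exact hf.continuousOn.integrableOn_compact hK

theorem integral_mul_add_pow {ν : Measure ℝ} {k : ℕ}
    (h : ∀ j ≤ k, Integrable (fun x ↦ x ^ j) ν) (c d : ℝ) :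
    ∫ x, (c * x + d) ^ k ∂ν =
      ∑ j ∈ Finset.range (k + 1), c ^ j * d ^ (k - j) * k.choose j * ∫ x, x ^ j ∂ν := by
  simp_rw [add_pow, mul_pow]
  rw [integral_finsetSum]
  · refine Finset.sum_congr rfl fun j _ ↦ ?_
    rw [← integral_const_mul]
    congr 1 with x
    ring
  · intro j hj
    exact (((h j (Nat.lt_succ_iff.1 (Finset.mem_range.1 hj))).const_mul _).mul_const _).mul_const _

theorem preimage_mul_add_Iic {K : Type*} [Field K] [LinearOrder K] [IsStrictOrderedRing K]
    {a : K} (ha : 0 < a) (b t : K) :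
    (fun x ↦ a * x + b) ⁻¹' Iic t = Iic ((t - b) / a) := by
  ext x
  simp only [mem_preimage, mem_Iic, le_div_iff₀ ha]
  constructor <;> intro h <;> linarith

section SelfSimilar

variable {α : Type*} [MeasurableSpace α]

def IsSelfSimilarEqualWeights (μ : Measure α) (S₁ S₂ : α → α) : Prop :=
  ∀ A, MeasurableSet A → μ A = 1 / 2 * μ (S₁ ⁻¹' A) + 1 / 2 * μ (S₂ ⁻¹' A)

variable {μ : Measure α} {S₁ S₂ : α → α}

theorem IsSelfSimilarEqualWeights.eq_smul_map_add_smul_map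
    (hμ : IsSelfSimilarEqualWeights μ S₁ S₂) (h₁ : Measurable S₁) (h₂ : Measurable S₂) :
    μ = (1 / 2 : ℝ≥0∞) • μ.map S₁ + (1 / 2 : ℝ≥0∞) • μ.map S₂ := by
  ext A hA
  rw [hμ A hA, Measure.add_apply, Measure.smul_apply, Measure.smul_apply,
    Measure.map_apply h₁ hA, Measure.map_apply h₂ hA, smul_eq_mul, smul_eq_mul]

theorem IsSelfSimilarEqualWeights.setIntegral_eq (hμ : IsSelfSimilarEqualWeights μ S₁ S₂)
    (h₁ : Measurable S₁) (h₂ : Measurable S₂) {E : Set α} (hE : MeasurableSet E) {f : α → ℝ}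
    (hf : Measurable f) (hf₁ : Integrable (f ∘ S₁) μ) (hf₂ : Integrable (f ∘ S₂) μ) :
    ∫ x in E, f x ∂μ =
      1 / 2 * ∫ x in S₁ ⁻¹' E, f (S₁ x) ∂μ + 1 / 2 * ∫ x in S₂ ⁻¹' E, f (S₂ x) ∂μ := by
  have hi₁ := ((integrable_map_measure hf.aestronglyMeasurable h₁.aemeasurable).2 hf₁).restrict
    (s := E)
  have hi₂ := ((integrable_map_measure hf.aestronglyMeasurable h₂.aemeasurable).2 hf₂).restrict
    (s := E)
  conv_lhs => rw [hμ.eq_smul_map_add_smul_map h₁ h₂]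
  rw [Measure.restrict_add, Measure.restrict_smul, Measure.restrict_smul,
    integral_add_measure (hi₁.smul_measure (by simp)) (hi₂.smul_measure (by simp)),
    integral_smul_measure, integral_smul_measure,
    setIntegral_map hE hf.aestronglyMeasurable h₁.aemeasurable,
    setIntegral_map hE hf.aestronglyMeasurable h₂.aemeasurable]
  simp

theorem IsSelfSimilarEqualWeights.integral_eq (hμ : IsSelfSimilarEqualWeights μ S₁ S₂)
    (h₁ : Measurable S₁) (h₂ : Measurable S₂) {f : α → ℝ} (hf : Measurable f)
    (hf₁ : Integrable (f ∘ S₁) μ) (hf₂ : Integrable (f ∘ S₂) μ) :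
    ∫ x, f x ∂μ = 1 / 2 * ∫ x, f (S₁ x) ∂μ + 1 / 2 * ∫ x, f (S₂ x) ∂μ := by
  simpa using hμ.setIntegral_eq h₁ h₂ MeasurableSet.univ hf hf₁ hf₂

end SelfSimilar

def IsBernoulliConvolution (ρ : ℝ) (μ : Measure ℝ) : Prop :=
  IsSelfSimilarEqualWeights μ (ρ * ·) (ρ * · + (1 - ρ))

namespace IsBernoulliConvolution

variable {ρ : ℝ} {μ : Measure ℝ}

theorem integral_pow [IsFiniteMeasure μ] (hμ : IsBernoulliConvolution ρ μ)
    (hsupp : μ (Icc 0 1)ᶜ = 0) (k : ℕ) :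
    ∫ x, x ^ k ∂μ = 1 / 2 * ρ ^ k * ∫ x, x ^ k ∂μ + 1 / 2 *
      ∑ j ∈ Finset.range (k + 1), ρ ^ j * (1 - ρ) ^ (k - j) * k.choose j * ∫ x, x ^ j ∂μ := by
  have hint : ∀ j, Integrable (fun x : ℝ ↦ x ^ j) μ := fun j ↦
    (continuous_pow j).integrable_of_measure_compl_eq_zero isCompact_Icc hsupp
  conv_lhs => rw [hμ.integral_eq (by fun_prop) (by fun_prop) (by fun_prop)
    (Continuous.integrable_of_measure_compl_eq_zero isCompact_Icc hsupp (by fun_prop))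
    (Continuous.integrable_of_measure_compl_eq_zero isCompact_Icc hsupp (by fun_prop))]
  rw [integral_mul_add_pow fun j _ ↦ hint j]
  simp_rw [mul_pow]
  rw [integral_const_mul, mul_assoc]

theorem integral_id [IsProbabilityMeasure μ] (hμ : IsBernoulliConvolution ρ μ) (hρ : ρ ≠ 1)
    (hsupp : μ (Icc 0 1)ᶜ = 0) :
    ∫ x, x ∂μ = 1 / 2 := by
  have h := hμ.integral_pow hsupp 1
  norm_num [Finset.sum_range_succ] at h
  refine mul_left_cancel₀ (sub_ne_zero.2 hρ.symm) ?_
  linear_combination h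

theorem integral_sq [IsProbabilityMeasure μ] (hμ : IsBernoulliConvolution ρ μ) (hρ : ρ ^ 2 ≠ 1)
    (hsupp : μ (Icc 0 1)ᶜ = 0) :
    ∫ x, x ^ 2 ∂μ = 1 / (2 * (1 + ρ)) := by
  have hρ1 : ρ ≠ 1 := fun h ↦ hρ (by simp [h])
  have hρ1' : 1 + ρ ≠ 0 := fun h ↦ hρ (by rw [eq_neg_add_of_add_eq h]; norm_num)
  have h := hμ.integral_pow hsupp 2
  norm_num [Finset.sum_range_succ, hμ.integral_id hρ1 hsupp] at h
  rw [eq_div_iff (mul_ne_zero two_ne_zero hρ1')]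
  refine mul_left_cancel₀ (sub_ne_zero.2 hρ.symm) ?_
  linear_combination 2 * (1 + ρ) * h

theorem measure_Iic_zero_of_golden [IsFiniteMeasure μ] (hμ : IsBernoulliConvolution ρ μ)
    (hρ : 0 < ρ) (hρ2 : ρ ^ 2 = 1 - ρ) (hsupp : μ (Icc 0 1)ᶜ = 0) :
    μ (Iic 0) = 0 := by
  have h₁ : (ρ * ·) ⁻¹' Iic (0 : ℝ) = Iic 0 := by rw [preimage_const_mul_Iic₀ _ hρ, zero_div]
  have h₂ : μ ((ρ * · + (1 - ρ)) ⁻¹' Iic 0) = 0 := by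
    refine measure_mono_null (fun x hx ↦ ?_) hsupp
    rw [mem_preimage, mem_Iic] at hx
    exact fun hx' ↦ by nlinarith [hx'.1]
  have hhalf := hμ (Iic 0) measurableSet_Iic
  rw [h₁, h₂, mul_zero, add_zero] at hhalf
  by_contra h
  have := ENNReal.half_lt_self h (measure_ne_top μ _)
  rw [ENNReal.div_eq_inv_mul, ← one_div, ← hhalf] at this
  exact lt_irrefl _ this

theorem setIntegral_Iic_sq_of_golden [IsFiniteMeasure μ] (hμ : IsBernoulliConvolution ρ μ)
    (hρ : 0 < ρ) (hρ2 : ρ ^ 2 = 1 - ρ) (hsupp : μ (Icc 0 1)ᶜ = 0) {f : ℝ → ℝ} (hf : Continuous f) :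
    ∫ x in Iic (ρ ^ 2), f x ∂μ = 1 / 2 * ∫ x in Iic ρ, f (ρ * x) ∂μ := by
  have hS₁ : (ρ * ·) ⁻¹' Iic (ρ ^ 2) = Iic ρ := by
    rw [preimage_const_mul_Iic₀ _ hρ, pow_two, mul_div_cancel_right₀ _ hρ.ne']
  have hS₂ : (ρ * · + (1 - ρ)) ⁻¹' Iic (ρ ^ 2) = Iic 0 := by
    rw [preimage_mul_add_Iic hρ, hρ2, sub_self, zero_div]
  rw [hμ.setIntegral_eq (by fun_prop) (by fun_prop) measurableSet_Iic hf.measurable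
      (Continuous.integrable_of_measure_compl_eq_zero isCompact_Icc hsupp (by fun_prop))
      (Continuous.integrable_of_measure_compl_eq_zero isCompact_Icc hsupp (by fun_prop)),
    hS₁, hS₂, setIntegral_measure_zero _ (hμ.measure_Iic_zero_of_golden hρ hρ2 hsupp),
    mul_zero, add_zero]

theorem setIntegral_Iic_of_golden [IsFiniteMeasure μ] (hμ : IsBernoulliConvolution ρ μ)
    (hρ : 0 < ρ) (hρ2 : ρ ^ 2 = 1 - ρ) (hsupp : μ (Icc 0 1)ᶜ = 0) {f : ℝ → ℝ} (hf : Continuous f) :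
    ∫ x in Iic ρ, f x ∂μ =
      1 / 2 * ∫ x, f (ρ * x) ∂μ + 1 / 2 * ∫ x in Iic (ρ ^ 2), f (ρ * x + (1 - ρ)) ∂μ := by
  have hS₁ : (ρ * ·) ⁻¹' Iic ρ = Iic 1 := by
    rw [preimage_const_mul_Iic₀ _ hρ, div_self hρ.ne']
  have hS₂ : (ρ * · + (1 - ρ)) ⁻¹' Iic ρ = Iic (ρ ^ 2) := by
    rw [preimage_mul_add_Iic hρ]
    congr 1
    rw [div_eq_iff hρ.ne']
    linear_combination (1 - ρ) * hρ2
  have hIic_one : Iic (1 : ℝ) =ᵐ[μ] univ := by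
    refine ae_eq_univ.2 (measure_mono_null (fun x hx ↦ ?_) hsupp)
    rw [compl_Iic, mem_Ioi] at hx
    exact fun hx' ↦ not_le.2 hx hx'.2
  rw [hμ.setIntegral_eq (by fun_prop) (by fun_prop) measurableSet_Iic hf.measurable
      (Continuous.integrable_of_measure_compl_eq_zero isCompact_Icc hsupp (by fun_prop))
      (Continuous.integrable_of_measure_compl_eq_zero isCompact_Icc hsupp (by fun_prop)),
    hS₁, hS₂, setIntegral_congr_set hIic_one, setIntegral_univ]

theorem setIntegral_Iic_sq_pow_of_golden [IsFiniteMeasure μ] (hμ : IsBernoulliConvolution ρ μ)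
    (hρ : 0 < ρ) (hρ2 : ρ ^ 2 = 1 - ρ) (hsupp : μ (Icc 0 1)ᶜ = 0) (k : ℕ) :
    ∫ x in Iic (ρ ^ 2), x ^ k ∂μ = 1 / 2 * ρ ^ k * ∫ x in Iic ρ, x ^ k ∂μ := by
  rw [hμ.setIntegral_Iic_sq_of_golden hρ hρ2 hsupp (continuous_pow k)]
  simp_rw [mul_pow]
  rw [integral_const_mul, mul_assoc]

theorem setIntegral_Iic_pow_of_golden [IsFiniteMeasure μ] (hμ : IsBernoulliConvolution ρ μ)
    (hρ : 0 < ρ) (hρ2 : ρ ^ 2 = 1 - ρ) (hsupp : μ (Icc 0 1)ᶜ = 0) (k : ℕ) :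
    ∫ x in Iic ρ, x ^ k ∂μ = 1 / 2 * ρ ^ k * ∫ x, x ^ k ∂μ + 1 / 2 *
      ∑ j ∈ Finset.range (k + 1),
        ρ ^ j * (1 - ρ) ^ (k - j) * k.choose j * ∫ x in Iic (ρ ^ 2), x ^ j ∂μ := by
  rw [hμ.setIntegral_Iic_of_golden hρ hρ2 hsupp (continuous_pow k),
    integral_mul_add_pow fun j _ ↦
      ((continuous_pow j).integrable_of_measure_compl_eq_zero isCompact_Icc hsupp).restrict]
  simp_rw [mul_pow]
  rw [integral_const_mul, mul_assoc]

theorem measureReal_Iic_sq_of_golden [IsProbabilityMeasure μ] (hμ : IsBernoulliConvolution ρ μ)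
    (hρ : 0 < ρ) (hρ2 : ρ ^ 2 = 1 - ρ) (hsupp : μ (Icc 0 1)ᶜ = 0) :
    μ.real (Iic (ρ ^ 2)) = 1 / 3 := by
  have hA := hμ.setIntegral_Iic_sq_pow_of_golden hρ hρ2 hsupp 0
  have hP := hμ.setIntegral_Iic_pow_of_golden hρ hρ2 hsupp 0
  norm_num at hA hP
  linear_combination (4 / 3) * hA + (2 / 3) * hP

theorem setIntegral_Iic_sq_id_of_golden [IsProbabilityMeasure μ] (hμ : IsBernoulliConvolution ρ μ)
    (hρ : 0 < ρ) (hρ2 : ρ ^ 2 = 1 - ρ) (hsupp : μ (Icc 0 1)ᶜ = 0) :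
    ∫ x in Iic (ρ ^ 2), x ∂μ = ρ ^ 2 * (3 + 2 * ρ) / (6 * (3 + ρ)) := by
  have hA := hμ.setIntegral_Iic_sq_pow_of_golden hρ hρ2 hsupp 1
  have hP := hμ.setIntegral_Iic_pow_of_golden hρ hρ2 hsupp 1
  have hm := hμ.integral_id (by nlinarith) hsupp
  have ha₀ := hμ.measureReal_Iic_sq_of_golden hρ hρ2 hsupp
  norm_num [Finset.sum_range_succ] at hA hP
  set a₁ := ∫ x in Iic (ρ ^ 2), x ∂μ
  rw [eq_div_iff (by positivity)]
  linear_combination 24 * hA + 12 * ρ * hP + 6 * ρ ^ 2 * hm + (6 * ρ - 6 * ρ ^ 2) * ha₀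
    + (6 * a₁ - 2 * ρ) * hρ2

theorem setIntegral_Iic_sq_sq_of_golden [IsProbabilityMeasure μ] (hμ : IsBernoulliConvolution ρ μ)
    (hρ : 0 < ρ) (hρ2 : ρ ^ 2 = 1 - ρ) (hsupp : μ (Icc 0 1)ᶜ = 0) :
    ∫ x in Iic (ρ ^ 2), x ^ 2 ∂μ = ρ ^ 4 * (5 * ρ + 4) / (6 * (ρ + 8)) := by
  have hA := hμ.setIntegral_Iic_sq_pow_of_golden hρ hρ2 hsupp 2
  have hP := hμ.setIntegral_Iic_pow_of_golden hρ hρ2 hsupp 2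
  have hm : ∫ x, x ^ 2 ∂μ = ρ / 2 := by
    rw [hμ.integral_sq (by nlinarith) hsupp]
    field_simp
    linear_combination -hρ2
  have ha₀ := hμ.measureReal_Iic_sq_of_golden hρ hρ2 hsupp
  have ha₁ := (eq_div_iff (by positivity)).1 (hμ.setIntegral_Iic_sq_id_of_golden hρ hρ2 hsupp)
  norm_num [Finset.sum_range_succ] at hA hP
  set a₁ := ∫ x in Iic (ρ ^ 2), x ∂μ
  set a₂ := ∫ x in Iic (ρ ^ 2), x ^ 2 ∂μ
  rw [eq_div_iff (by positivity)]
  -- eliminate `∫ x in Iic ρ, x ^ 2 ∂μ` between `hA` and `hP`, then reduce modulo `ρ ^ 2 + ρ - 1`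
  linear_combination (24 + 48 * ρ) * hA + (12 * ρ ^ 2 + 24 * ρ ^ 3) * hP + (10 - 16 * ρ) * ha₁
    + (6 * ρ ^ 4 + 12 * ρ ^ 5) * hm + (6 * ρ ^ 2 - 18 * ρ ^ 4 + 12 * ρ ^ 5) * ha₀
    + (-24 * a₂ + 180 * a₁ + 18 * ρ * a₂ - 48 * ρ * a₁ - 32 * ρ ^ 2 - 6 * ρ ^ 2 * a₂
      + 36 * ρ ^ 2 * a₁ - 4 * ρ ^ 3 + 12 * ρ ^ 3 * a₂ - 24 * ρ ^ 3 * a₁ + 6 * ρ ^ 4) * hρ2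

end IsBernoulliConvolution

/-- For the infinite Bernoulli convolution `μ` associated with the
golden ratio `ρ = (√5 − 1)/2`, one has `∫_{[0,ρ²]} x² dμ = ρ⁴(5ρ + 4)/(6(ρ + 8))`. -/
theorem bernoulli_convolution_second_moment
    (ρ : ℝ) (hρ : ρ = (Real.sqrt 5 - 1) / 2)
    (μ : Measure ℝ) [IsProbabilityMeasure μ]
    (hsupp : μ (Set.Icc (0 : ℝ) 1)ᶜ = 0)
    (hself : ∀ A : Set ℝ, MeasurableSet A →
      μ A = (1 / 2) * μ ((fun x => ρ * x) ⁻¹' A) +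
            (1 / 2) * μ ((fun x => ρ * x + (1 - ρ)) ⁻¹' A)) :
    (∫ x in Set.Icc 0 (ρ ^ 2), x ^ 2 ∂μ) = ρ ^ 4 * (5 * ρ + 4) / (6 * (ρ + 8)) := by
  have h5 : Real.sqrt 5 ^ 2 = 5 := Real.sq_sqrt (by norm_num)
  have hρ0 : 0 < ρ := by rw [hρ]; nlinarith [Real.sqrt_nonneg 5]
  have hρ2 : ρ ^ 2 = 1 - ρ := by rw [hρ]; linear_combination h5 / 4
  have hμ : IsBernoulliConvolution ρ μ := hself
  have hIcc : Icc 0 (ρ ^ 2) =ᵐ[μ] Iic (ρ ^ 2) := by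
    rw [← Iio_union_Icc_eq_Iic (sq_nonneg ρ)]
    refine (union_ae_eq_right_of_ae_eq_empty (ae_eq_empty.2 ?_)).symm
    exact measure_mono_null Iio_subset_Iic_self (hμ.measure_Iic_zero_of_golden hρ0 hρ2 hsupp)
  rw [setIntegral_congr_set hIcc, hμ.setIntegral_Iic_sq_sq_of_golden hρ0 hρ2 hsupp]
end

section
/- For i = 1, 2, 3, 4 let S_i(x) = (1/3)x + (2/3)(i − 1), and let μ be a Borel probability measure on ℝ with support contained in [0,3] satisfying μ(A) = (1/8) μ(S_1^{-1}(A)) + (3/8) μ(S_2^{-1}(A)) + (3/8) μ(S_3^{-1}(A)) + (1/8) μ(S_4^{-1}(A)) for every Borel set A ⊆ ℝ. Then μ([0,1]) = 1/5, μ([1,2]) = 3/5, and μ([2,3]) = 1/5. -/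
open MeasureTheory Set ENNReal

lemma pre1_Icc (a b : ℝ) :
    (fun x : ℝ => (1 / 3) * x) ⁻¹' Icc a b = Icc (3 * a) (3 * b) := by
  ext x
  simp only [mem_preimage, mem_Icc]
  constructor <;> intro h <;> constructor <;> linarith [h.1, h.2]

lemma pre2_Icc (t a b : ℝ) :
    (fun x : ℝ => (1 / 3) * x + t) ⁻¹' Icc a b = Icc (3 * (a - t)) (3 * (b - t)) := by
  ext x
  simp only [mem_preimage, mem_Icc]
  constructor <;> intro h <;> constructor <;> linarith [h.1, h.2]

lemma pre1_sing (c : ℝ) :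
    (fun x : ℝ => (1 / 3) * x) ⁻¹' {c} = {3 * c} := by
  ext x
  simp only [mem_preimage, mem_singleton_iff]
  constructor <;> intro h <;> linarith

lemma pre2_sing (t c : ℝ) :
    (fun x : ℝ => (1 / 3) * x + t) ⁻¹' {c} = {3 * (c - t)} := by
  ext x
  simp only [mem_preimage, mem_singleton_iff]
  constructor <;> intro h <;> linarith

lemma ennreal_frac_ne_top (n m : ℕ) (hm : m ≠ 0) : (n : ℝ≥0∞) / m ≠ ⊤ := by
  simp [ENNReal.div_eq_top, hm]

/-- Let `μ` be the 3-fold convolution of the Cantor measure: the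
Borel probability measure supported in `[0,3]` satisfying
`μ = ⅛ μ∘S₁⁻¹ + ⅜ μ∘S₂⁻¹ + ⅜ μ∘S₃⁻¹ + ⅛ μ∘S₄⁻¹` for `Sᵢ x = x/3 + 2(i−1)/3`.
Then `μ([0,1]) = 1/5`, `μ([1,2]) = 3/5`, `μ([2,3]) = 1/5`. -/
theorem cantor_threefold_measures_of_unit_intervals
    (μ : Measure ℝ) [IsProbabilityMeasure μ]
    (hsupp : μ (Set.Icc (0 : ℝ) 3)ᶜ = 0)
    (hself : ∀ A : Set ℝ, MeasurableSet A →
      μ A = (1 / 8) * μ ((fun x => (1 / 3) * x) ⁻¹' A) +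
            (3 / 8) * μ ((fun x => (1 / 3) * x + 2 / 3) ⁻¹' A) +
            (3 / 8) * μ ((fun x => (1 / 3) * x + 4 / 3) ⁻¹' A) +
            (1 / 8) * μ ((fun x => (1 / 3) * x + 2) ⁻¹' A)) :
    μ (Set.Icc (0 : ℝ) 1) = 1 / 5 ∧
    μ (Set.Icc (1 : ℝ) 2) = 3 / 5 ∧
    μ (Set.Icc (2 : ℝ) 3) = 1 / 5 := by
  have h18 : (1 : ℝ≥0∞) / 8 ≠ ⊤ := by simp [ENNReal.div_eq_top]
  have h38 : (3 : ℝ≥0∞) / 8 ≠ ⊤ := by simp [ENNReal.div_eq_top]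
  -- total mass on [0,3]
  have h03 : μ (Icc (0 : ℝ) 3) = 1 := by
    have h := measure_add_measure_compl (μ := μ) (measurableSet_Icc (a := (0:ℝ)) (b := 3))
    rw [hsupp, add_zero, measure_univ] at h
    exact h
  -- sets outside [0,3] are null
  have hnull : ∀ s : Set ℝ, s ⊆ (Icc (0:ℝ) 3)ᶜ → μ s = 0 :=
    fun s hs => measure_mono_null hs hsupp
  have hIccnull : ∀ a b : ℝ, (b < 0 ∨ 3 < a) → μ (Icc a b) = 0 := by
    intro a b h
    apply hnull
    intro x hx
    simp only [mem_Icc] at hx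
    simp only [mem_compl_iff, mem_Icc, not_and, not_le]
    rcases h with h | h <;> intro h0 <;> linarith [hx.1, hx.2]
  have hsingnull : ∀ c : ℝ, (c < 0 ∨ 3 < c) → μ {c} = 0 := by
    intro c h
    apply hnull
    intro x hx
    simp only [mem_singleton_iff] at hx
    subst hx
    simp only [mem_compl_iff, mem_Icc, not_and, not_le]
    rcases h with h | h <;> intro h0 <;> linarith
  -- trimming intervals to [0,3]
  have htrim : ∀ a b : ℝ, μ (Icc a b ∩ Icc 0 3) = μ (Icc a b) :=
    fun a b => measure_inter_conull hsupp
  -- atoms vanish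
  have hatom : ∀ x : ℝ≥0∞, x ≠ ⊤ → (x = 8⁻¹ * x ∨ x = 3/8 * x) → x = 0 := by
    intro x hx h
    have hr : x.toReal = 0 := by
      rcases h with h | h
      · have : x.toReal = ((8:ℝ≥0∞)⁻¹ * x).toReal := by rw [← h]
        rw [ENNReal.toReal_mul] at this
        simp only [ENNReal.toReal_inv, ENNReal.toReal_div, ENNReal.toReal_one, ENNReal.toReal_ofNat] at this
        linarith
      · have : x.toReal = ((3:ℝ≥0∞)/8 * x).toReal := by rw [← h]
        rw [ENNReal.toReal_mul] at this
        simp only [ENNReal.toReal_div, ENNReal.toReal_ofNat] at this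
        linarith
    rcases (ENNReal.toReal_eq_zero_iff x).mp hr with h0 | h0
    · exact h0
    · exact absurd h0 hx
  have hμ0 : μ {(0 : ℝ)} = 0 := by
    have h := hself {0} (measurableSet_singleton 0)
    rw [pre1_sing, pre2_sing, pre2_sing, pre2_sing] at h
    norm_num at h
    rw [hsingnull (-2) (by norm_num), hsingnull (-4) (by norm_num),
      hsingnull (-6) (by norm_num)] at h
    simp only [mul_zero, add_zero] at h
    exact hatom _ (measure_ne_top μ _) (Or.inl h)
  have hμ3 : μ {(3 : ℝ)} = 0 := by
    have h := hself {3} (measurableSet_singleton 3)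
    rw [pre1_sing, pre2_sing, pre2_sing, pre2_sing] at h
    norm_num at h
    rw [hsingnull 9 (by norm_num), hsingnull 7 (by norm_num),
      hsingnull 5 (by norm_num)] at h
    simp only [mul_zero, add_zero, zero_add] at h
    exact hatom _ (measure_ne_top μ _) (Or.inl h)
  have hμ1 : μ {(1 : ℝ)} = 0 := by
    have h := hself {1} (measurableSet_singleton 1)
    rw [pre1_sing, pre2_sing, pre2_sing, pre2_sing] at h
    norm_num at h
    rw [hμ3, hsingnull (-1) (by norm_num), hsingnull (-3) (by norm_num)] at h
    simp only [mul_zero, add_zero, zero_add] at h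
    exact hatom _ (measure_ne_top μ _) (Or.inr h)
  have hμ2 : μ {(2 : ℝ)} = 0 := by
    have h := hself {2} (measurableSet_singleton 2)
    rw [pre1_sing, pre2_sing, pre2_sing, pre2_sing] at h
    norm_num at h
    rw [hμ0, hsingnull 6 (by norm_num), hsingnull 4 (by norm_num)] at h
    simp only [mul_zero, add_zero, zero_add] at h
    exact hatom _ (measure_ne_top μ _) (Or.inr h)
  -- solving x = 1/8 + 3/8 x
  have solve : ∀ x : ℝ≥0∞, x ≠ ⊤ → x = 8⁻¹ + 3/8 * x → x = 1/5 := by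
    intro x hx h
    have hr : x.toReal = 8⁻¹ + 3/8 * x.toReal := by
      have : x.toReal = ((8:ℝ≥0∞)⁻¹ + 3/8 * x).toReal := by rw [← h]
      rw [ENNReal.toReal_add (by simp) (ENNReal.mul_ne_top h38 hx), ENNReal.toReal_mul] at this
      simpa only [ENNReal.toReal_inv, ENNReal.toReal_div, ENNReal.toReal_one, ENNReal.toReal_ofNat] using this
    have h5 : x.toReal = 1/5 := by linarith
    rw [← ENNReal.toReal_eq_toReal_iff' hx (by simp [ENNReal.div_eq_top]), h5]
    simp [ENNReal.toReal_div]
  -- μ [0,1]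
  have hA : μ (Icc (0 : ℝ) 1) = 1 / 5 := by
    have h := hself (Icc 0 1) measurableSet_Icc
    rw [pre1_Icc, pre2_Icc, pre2_Icc, pre2_Icc] at h
    norm_num at h
    have e1 : μ (Icc (-2 : ℝ) 1) = μ (Icc (0 : ℝ) 1) := by
      rw [← htrim (-2) 1, Icc_inter_Icc]
      norm_num
    rw [h03, e1, hIccnull (-4) (-1) (by norm_num), hIccnull (-6) (-3) (by norm_num)] at h
    simp only [mul_zero, add_zero, mul_one] at h
    exact solve _ (measure_ne_top μ _) h
  -- μ [2,3]
  have hC : μ (Icc (2 : ℝ) 3) = 1 / 5 := by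
    have h := hself (Icc 2 3) measurableSet_Icc
    rw [pre1_Icc, pre2_Icc, pre2_Icc, pre2_Icc] at h
    norm_num at h
    have e1 : μ (Icc (2 : ℝ) 5) = μ (Icc (2 : ℝ) 3) := by
      rw [← htrim 2 5, Icc_inter_Icc]
      norm_num
    rw [hIccnull 6 9 (by norm_num), hIccnull 4 7 (by norm_num), e1, h03] at h
    simp only [mul_zero, add_zero, zero_add, mul_one] at h
    rw [add_comm] at h
    exact solve _ (measure_ne_top μ _) h
  -- closed and half-open intervals agree since endpoints are null
  have hIoc12 : μ (Ioc (1 : ℝ) 2) = μ (Icc (1 : ℝ) 2) := by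
    rw [← Icc_diff_left, measure_diff_null hμ1]
  have hIoc23 : μ (Ioc (2 : ℝ) 3) = μ (Icc (2 : ℝ) 3) := by
    rw [← Icc_diff_left, measure_diff_null hμ2]
  -- additivity over [0,3]
  have hsplit : μ (Icc (0:ℝ) 1) + μ (Ioc (1:ℝ) 2) + μ (Ioc (2:ℝ) 3) = 1 := by
    rw [← h03,
      ← Icc_union_Ioc_eq_Icc (by norm_num : (0:ℝ) ≤ 1) (by norm_num : (1:ℝ) ≤ 3),
      ← Ioc_union_Ioc_eq_Ioc (by norm_num : (1:ℝ) ≤ 2) (by norm_num : (2:ℝ) ≤ 3)]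
    rw [measure_union ?d1 (measurableSet_Ioc.union measurableSet_Ioc),
      measure_union ?d2 measurableSet_Ioc, add_assoc]
    case d1 =>
      rw [Set.disjoint_left]
      intro x hx hx'
      simp only [mem_Icc] at hx
      simp only [mem_union, mem_Ioc] at hx'
      rcases hx' with hx' | hx' <;> linarith [hx.2, hx'.1]
    case d2 =>
      rw [Set.disjoint_left]
      intro x hx hx'
      simp only [mem_Ioc] at hx hx'
      linarith [hx.2, hx'.1]
  -- μ [1,2]
  have hB : μ (Icc (1 : ℝ) 2) = 3 / 5 := by
    rw [hIoc12, hIoc23, hA, hC] at hsplit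
    have hfin := measure_ne_top μ (Icc (1:ℝ) 2)
    have hr : (1:ℝ)/5 + (μ (Icc (1:ℝ) 2)).toReal + 1/5 = 1 := by
      have : ((1:ℝ≥0∞)/5 + μ (Icc (1:ℝ) 2) + 1/5).toReal = (1 : ℝ≥0∞).toReal := by
        rw [hsplit]
      rw [ENNReal.toReal_add (ENNReal.add_ne_top.mpr ⟨by simp [ENNReal.div_eq_top], hfin⟩)
          (by simp [ENNReal.div_eq_top]),
        ENNReal.toReal_add (by simp [ENNReal.div_eq_top]) hfin] at this
      simpa only [ENNReal.toReal_inv, ENNReal.toReal_div, ENNReal.toReal_one, ENNReal.toReal_ofNat] using this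
    have h35 : (μ (Icc (1:ℝ) 2)).toReal = 3/5 := by linarith
    rw [← ENNReal.toReal_eq_toReal_iff' hfin (by simp [ENNReal.div_eq_top]), h35]
    simp [ENNReal.toReal_div]
  exact ⟨hA, hB, hC⟩
end

section
/- For i = 1, 2, 3, 4 let S_i(x) = (1/3)x + (2/3)(i − 1), and let μ be a Borel probability measure on ℝ with support contained in [0,3] satisfying μ(A) = (1/8) μ(S_1^{-1}(A)) + (3/8) μ(S_2^{-1}(A)) + (3/8) μ(S_3^{-1}(A)) + (1/8) μ(S_4^{-1}(A)) for every Borel set A ⊆ ℝ. Then ∫_{[0,1]} x dμ(x) = 9/70, ∫_{[1,2]} x dμ(x) = 9/10, and ∫_{[2,3]} x dμ(x) = 33/70. -/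
/-!
Pushing the self-similarity identity through integrals expresses `μ(I)` and `∫_I x dμ`, for an
interval `I`, through the same quantities on the intervals `S_i⁻¹(I) ∩ [0,3]`. For
`I = {0}, {3}, {1}, {2}, [0,1], [2,3], [0,3]` this is a triangular linear system: the four points
carry no mass, `μ[0,1] = μ[2,3] = 1/5`, `∫_{[0,3]} x dμ = 3/2`, and the moments over `[0,1]` and
`[2,3]` follow. The moment over `[1,2]` is the remainder of `3/2`, as `1` and `2` are not atoms.
-/

open MeasureTheory Set
open scoped ENNReal

section SelfSimilar

variable {α ι : Type*} [MeasurableSpace α] [Fintype ι] {μ : Measure α} {w : ι → ℝ≥0∞}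
  {S : ι → α → α}

theorem MeasureTheory.Measure.eq_sum_smul_map_of_selfSimilar (hS : ∀ i, Measurable (S i))
    (h : ∀ A, MeasurableSet A → μ A = ∑ i, w i * μ (S i ⁻¹' A)) :
    μ = ∑ i, w i • μ.map (S i) := by
  ext A hA
  simp [h A hA, Measure.map_apply (hS _) hA]

theorem setIntegral_eq_sum_of_selfSimilar (hS : ∀ i, Measurable (S i)) (hw : ∀ i, w i ≠ ∞)
    (h : ∀ A, MeasurableSet A → μ A = ∑ i, w i * μ (S i ⁻¹' A))
    {f : α → ℝ} {A : Set α} (hA : MeasurableSet A) (hf : ∀ i, IntegrableOn f A (μ.map (S i))) :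
    ∫ x in A, f x ∂μ = ∑ i, (w i).toReal * ∫ x in S i ⁻¹' A, f (S i x) ∂μ := by
  have hrestrict : μ.restrict A = ∑ i, w i • (μ.map (S i)).restrict A := by
    conv_lhs => rw [Measure.eq_sum_smul_map_of_selfSimilar hS h]
    simp only [← Measure.restrictₗ_apply, map_sum, map_smul]
  rw [hrestrict, integral_finsetSum_measure fun i _ => (hf i).smul_measure (hw i)]
  refine Finset.sum_congr rfl fun i _ => ?_
  have hfi := (hf i).aestronglyMeasurable
  rw [Measure.restrict_map (hS i) hA] at hfi ⊢
  rw [integral_smul_measure, integral_map (hS i).aemeasurable hfi, smul_eq_mul]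

end SelfSimilar

theorem Icc_ae_eq_Icc_sup_inf {α : Type*} [MeasurableSpace α] [Lattice α] {μ : Measure α}
    {c d : α} (h : μ (Icc c d)ᶜ = 0) (a b : α) : Icc a b =ᵐ[μ] Icc (a ⊔ c) (b ⊓ d) := by
  rw [← Icc_inter_Icc]
  simpa using ((Filter.EventuallyEq.rfl (f := Icc a b)).inter (ae_eq_univ.mpr h)).symm

theorem setIntegral_Icc_add_setIntegral_Icc {μ : Measure ℝ} {f : ℝ → ℝ} {a b c : ℝ}
    (hab : a ≤ b) (hbc : b ≤ c) (hb : μ {b} = 0) (hf : IntegrableOn f (Icc a c) μ) :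
    ∫ x in Icc a b, f x ∂μ + ∫ x in Icc b c, f x ∂μ = ∫ x in Icc a c, f x ∂μ := by
  rw [← Icc_union_Icc_eq_Icc hab hbc] at hf ⊢
  have hinter : Icc a b ∩ Icc b c ⊆ {b} := fun x ⟨hx₁, hx₂⟩ => le_antisymm hx₁.2 hx₂.1
  exact (setIntegral_union₀ (measure_mono_null hinter hb) measurableSet_Icc.nullMeasurableSet
    (hf.mono_set subset_union_left) (hf.mono_set subset_union_right)).symm

theorem preimage_mul_add_Icc {r : ℝ} (hr : 0 < r) (s a b : ℝ) :
    (fun x => r * x + s) ⁻¹' Icc a b = Icc ((a - s) / r) ((b - s) / r) := by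
  ext x
  simp only [mem_preimage, mem_Icc, div_le_iff₀ hr, le_div_iff₀ hr]
  constructor <;> rintro ⟨h₁, h₂⟩ <;> constructor <;> linarith

theorem setIntegral_mul_add {α : Type*} [MeasurableSpace α] {μ : Measure α} [IsFiniteMeasure μ]
    {s : Set α} {g : α → ℝ} (hg : IntegrableOn g s μ) (r t : ℝ) :
    ∫ x in s, (r * g x + t) ∂μ = r * ∫ x in s, g x ∂μ + t * μ.real s := by
  rw [integral_add (hg.const_mul r) (integrable_const t), integral_const_mul, setIntegral_const,
    smul_eq_mul, mul_comm t]

section AffineSelfSimilar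

variable {ι : Type*} [Fintype ι] {μ : Measure ℝ} [IsFiniteMeasure μ] {w : ι → ℝ≥0∞}
  {r c d : ℝ} {t : ι → ℝ}

theorem setIntegral_Icc_eq_sum_of_affine_selfSimilar (hr : 0 < r) (hw : ∀ i, w i ≠ ∞)
    (h : ∀ A, MeasurableSet A → μ A = ∑ i, w i * μ ((fun x => r * x + t i) ⁻¹' A))
    (hsupp : μ (Icc c d)ᶜ = 0) {f : ℝ → ℝ} (hf : Continuous f) (a b : ℝ) :
    ∫ x in Icc a b, f x ∂μ = ∑ i, (w i).toReal *
      ∫ x in Icc (max ((a - t i) / r) c) (min ((b - t i) / r) d), f (r * x + t i) ∂μ := by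
  rw [setIntegral_eq_sum_of_selfSimilar (fun i => by fun_prop) hw h measurableSet_Icc
    fun i => hf.integrableOn_Icc]
  refine Finset.sum_congr rfl fun i _ => ?_
  rw [preimage_mul_add_Icc hr, setIntegral_congr_set (Icc_ae_eq_Icc_sup_inf hsupp _ _)]

theorem measureReal_Icc_eq_sum_of_affine_selfSimilar (hr : 0 < r) (hw : ∀ i, w i ≠ ∞)
    (h : ∀ A, MeasurableSet A → μ A = ∑ i, w i * μ ((fun x => r * x + t i) ⁻¹' A))
    (hsupp : μ (Icc c d)ᶜ = 0) (a b : ℝ) :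
    μ.real (Icc a b) = ∑ i, (w i).toReal *
      μ.real (Icc (max ((a - t i) / r) c) (min ((b - t i) / r) d)) := by
  simpa using setIntegral_Icc_eq_sum_of_affine_selfSimilar hr hw h hsupp continuous_const
    (f := fun _ => (1 : ℝ)) a b

theorem setIntegral_Icc_id_eq_sum_of_affine_selfSimilar (hr : 0 < r) (hw : ∀ i, w i ≠ ∞)
    (h : ∀ A, MeasurableSet A → μ A = ∑ i, w i * μ ((fun x => r * x + t i) ⁻¹' A))
    (hsupp : μ (Icc c d)ᶜ = 0) (a b : ℝ) :
    ∫ x in Icc a b, x ∂μ = ∑ i, (w i).toReal *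
      (r * ∫ x in Icc (max ((a - t i) / r) c) (min ((b - t i) / r) d), x ∂μ +
        t i * μ.real (Icc (max ((a - t i) / r) c) (min ((b - t i) / r) d))) := by
  rw [setIntegral_Icc_eq_sum_of_affine_selfSimilar hr hw h hsupp continuous_id' a b]
  have hid (p q : ℝ) : IntegrableOn (fun x => x) (Icc p q) μ := continuous_id.integrableOn_Icc
  simp only [setIntegral_mul_add (hid _ _)]

end AffineSelfSimilar

/-- For the 3-fold convolution of the Cantor measure `μ`, one has
`∫_{[0,1]} x dμ = 9/70`, `∫_{[1,2]} x dμ = 9/10`, `∫_{[2,3]} x dμ = 33/70`. -/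
theorem cantor_threefold_first_moments
    (μ : Measure ℝ) [IsProbabilityMeasure μ]
    (hsupp : μ (Set.Icc (0 : ℝ) 3)ᶜ = 0)
    (hself : ∀ A : Set ℝ, MeasurableSet A →
      μ A = (1 / 8) * μ ((fun x => (1 / 3) * x) ⁻¹' A) +
            (3 / 8) * μ ((fun x => (1 / 3) * x + 2 / 3) ⁻¹' A) +
            (3 / 8) * μ ((fun x => (1 / 3) * x + 4 / 3) ⁻¹' A) +
            (1 / 8) * μ ((fun x => (1 / 3) * x + 2) ⁻¹' A)) :
    (∫ x in Set.Icc (0 : ℝ) 1, x ∂μ) = 9 / 70 ∧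
    (∫ x in Set.Icc (1 : ℝ) 2, x ∂μ) = 9 / 10 ∧
    (∫ x in Set.Icc (2 : ℝ) 3, x ∂μ) = 33 / 70 := by
  have h : ∀ A, MeasurableSet A → μ A = ∑ i, ![(1 / 8 : ℝ≥0∞), 3 / 8, 3 / 8, 1 / 8] i *
      μ ((fun x => 1 / 3 * x + ![(0 : ℝ), 2 / 3, 4 / 3, 2] i) ⁻¹' A) := by
    simpa [Fin.sum_univ_four] using hself
  have hw : ∀ i, ![(1 / 8 : ℝ≥0∞), 3 / 8, 3 / 8, 1 / 8] i ≠ ∞ := by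
    intro i
    fin_cases i <;> simp [ENNReal.div_eq_top]
  have mass := measureReal_Icc_eq_sum_of_affine_selfSimilar (by norm_num) hw h hsupp
  have moment := setIntegral_Icc_id_eq_sum_of_affine_selfSimilar (by norm_num) hw h hsupp
  have hfull : μ.real (Icc 0 3) = 1 := by
    rw [measureReal_def, (prob_compl_eq_zero_iff measurableSet_Icc).mp hsupp, ENNReal.toReal_one]
  have m₀ := mass 0 0
  have m₁ := mass 1 1
  have m₂ := mass 2 2
  have m₃ := mass 3 3
  have m₀₁ := mass 0 1
  have m₂₃ := mass 2 3
  have i₀₃ := moment 0 3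
  have i₀₁ := moment 0 1
  have i₂₃ := moment 2 3
  norm_num [Fin.sum_univ_succ, Icc_eq_empty_of_lt, measureReal_def]
    at m₀ m₁ m₂ m₃ m₀₁ m₂₃ i₀₃ i₀₁ i₂₃ hfull
  have hatom₁ : μ {1} = 0 := (measureReal_eq_zero_iff).mp (by rw [measureReal_def]; linarith)
  have hatom₂ : μ {2} = 0 := (measureReal_eq_zero_iff).mp (by rw [measureReal_def]; linarith)
  have hid : IntegrableOn (fun x : ℝ => x) (Icc 0 3) μ := continuous_id.integrableOn_Icc
  have split₁ := setIntegral_Icc_add_setIntegral_Icc (by norm_num) (by norm_num) hatom₁ hid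
  have split₂ := setIntegral_Icc_add_setIntegral_Icc (by norm_num) (by norm_num) hatom₂
    (hid.mono_set (Icc_subset_Icc_left zero_le_one))
  refine ⟨by linarith, by linarith, by linarith⟩
end
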